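/- Fix R > 0, indices i, j ∈ [n], and a matrix C ∈ ℝ^{ℓ×d} with ‖C X_iᵀ‖ = 1 for all i and |X_i Cᵀ C X_jᵀ| ≤ 2 for all i, j. Let B(0) ∈ ℝ^{m×ℓ} have i.i.d. N(0,1) entries. Then the expectation over B(0) of the supremum, over all B ∈ ℝ^{m×ℓ} with ‖B_r C − B_r(0) C‖ ≤ R for every r ∈ [m], of |H(B)_{ij} − H(B(0))_{ij}| is at most C₀·R, where C₀ > 0 is an absolute constant. -/

import Mathlib

open MeasureTheory ProbabilityTheory Real
open scoped NNReal

noncomputable section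

/-- Real-valued indicator of a proposition. -/
def ind (P : Prop) : ℝ := @ite _ P (Classical.dec P) 1 0

/-- Dot product of two real vectors. -/
def dot {p : ℕ} (x y : Fin p → ℝ) : ℝ := ∑ i, x i * y i

/-- Matrix-vector product. -/
def mvec {a b : ℕ} (M : Fin a → Fin b → ℝ) (x : Fin b → ℝ) : Fin a → ℝ := fun i => dot (M i) x

/-- Vector-matrix product. -/
def vmul {a b : ℕ} (x : Fin a → ℝ) (M : Fin a → Fin b → ℝ) : Fin b → ℝ :=
  fun j => ∑ i, x i * M i j

/-- Euclidean norm of a real vector. -/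
def eunorm {p : ℕ} (x : Fin p → ℝ) : ℝ := Real.sqrt (∑ i, x i ^ 2)

/-- ℓ²→ℓ² operator (spectral) norm of a matrix. -/
def specNorm {a b : ℕ} (M : Fin a → Fin b → ℝ) : ℝ :=
  sSup {c : ℝ | ∃ x : Fin b → ℝ, ∑ j, x j ^ 2 ≤ 1 ∧ c = eunorm (mvec M x)}

/-- Smallest eigenvalue of a (symmetric) matrix, as the infimum of the quadratic form
over the unit sphere. -/
def lamMin {n : ℕ} (M : Fin n → Fin n → ℝ) : ℝ :=
  sInf {c : ℝ | ∃ x : Fin n → ℝ, ∑ i, x i ^ 2 = 1 ∧ c = dot x (mvec M x)}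

/-- Standard Gaussian measure on ℝ^b. -/
def stdGaussian (b : ℕ) : Measure (Fin b → ℝ) := Measure.pi fun _ => gaussianReal 0 1

/-- Measure on a×b real matrices with i.i.d. centered Gaussian entries of variance `v`. -/
def gaussMatrix (a b : ℕ) (v : ℝ≥0) : Measure (Fin a → Fin b → ℝ) :=
  Measure.pi fun _ => Measure.pi fun _ => gaussianReal 0 v

/-- Uniform measure on {-1, 1} ⊆ ℝ. -/
def signMeasure : Measure ℝ :=
  (PMF.uniformOfFinset ({-1, 1} : Finset ℝ) ⟨-1, by simp⟩).toMeasure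

instance : IsProbabilityMeasure signMeasure := by
  unfold signMeasure; infer_instance

/-- Uniform measure on {-1,1}^m. -/
def signVec (m : ℕ) : Measure (Fin m → ℝ) := Measure.pi fun _ => signMeasure

instance (b : ℕ) : IsProbabilityMeasure (stdGaussian b) := by
  unfold _root_.stdGaussian; infer_instance

instance (a b : ℕ) (v : ℝ≥0) : IsProbabilityMeasure (gaussMatrix a b v) := by
  unfold gaussMatrix; infer_instance

instance (m : ℕ) : IsProbabilityMeasure (signVec m) := by
  unfold signVec; infer_instance

/-- Output of the plain two-layer ReLU network. -/
def netPlain {n d m : ℕ} (X : Fin n → Fin d → ℝ) (v : Fin m → ℝ)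
    (W : Fin m → Fin d → ℝ) (i : Fin n) : ℝ :=
  (Real.sqrt m)⁻¹ * ∑ r, v r * max 0 (dot (W r) (X i))

/-- Gradient of Φ(W) = ½‖y-u‖² w.r.t. the r-th row of W (plain network). -/
def gradPlain {n d m : ℕ} (X : Fin n → Fin d → ℝ) (v : Fin m → ℝ) (y : Fin n → ℝ)
    (W : Fin m → Fin d → ℝ) (r : Fin m) : Fin d → ℝ :=
  fun q => -(Real.sqrt m)⁻¹ *
    ∑ j, (y j - netPlain X v W j) * v r * ind (0 ≤ dot (W r) (X j)) * X j q

/-- NTK matrix of the plain network. -/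
def HinfPlain {n d : ℕ} (X : Fin n → Fin d → ℝ) (i j : Fin n) : ℝ :=
  ∫ w, dot (X i) (X j) * ind (0 ≤ dot w (X i)) * ind (0 ≤ dot w (X j)) ∂ stdGaussian d

/-- `X_i Cᵀ C X_jᵀ`. -/
def dotC {n d ℓ : ℕ} (X : Fin n → Fin d → ℝ) (C : Fin ℓ → Fin d → ℝ) (i j : Fin n) : ℝ :=
  dot (mvec C (X i)) (mvec C (X j))

/-- Output of the input-dimension-reduced two-layer ReLU network. -/
def netFac {n d ℓ m : ℕ} (X : Fin n → Fin d → ℝ) (C : Fin ℓ → Fin d → ℝ)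
    (v : Fin m → ℝ) (B : Fin m → Fin ℓ → ℝ) (i : Fin n) : ℝ :=
  (Real.sqrt m)⁻¹ * ∑ r, v r * max 0 (dot (B r) (mvec C (X i)))

/-- Gradient of Φ(B) = ½‖y-u‖² w.r.t. the r-th row of B (input-dimension-reduced network). -/
def gradFac {n d ℓ m : ℕ} (X : Fin n → Fin d → ℝ) (C : Fin ℓ → Fin d → ℝ)
    (v : Fin m → ℝ) (y : Fin n → ℝ) (B : Fin m → Fin ℓ → ℝ) (r : Fin m) : Fin ℓ → ℝ :=
  fun q => -(Real.sqrt m)⁻¹ *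
    ∑ j, (y j - netFac X C v B j) * v r * ind (0 ≤ dot (B r) (mvec C (X j))) * mvec C (X j) q

/-- NTK matrix of the input-dimension-reduced network. -/
def HinfFac {n d ℓ : ℕ} (X : Fin n → Fin d → ℝ) (C : Fin ℓ → Fin d → ℝ) (i j : Fin n) : ℝ :=
  ∫ b, dotC X C i j * ind (0 ≤ dot b (mvec C (X i))) * ind (0 ≤ dot b (mvec C (X j)))
    ∂ stdGaussian ℓ

/-- Empirical NTK matrix of the input-dimension-reduced network at weights B. -/
def HFac {n d ℓ m : ℕ} (X : Fin n → Fin d → ℝ) (C : Fin ℓ → Fin d → ℝ)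
    (B : Fin m → Fin ℓ → ℝ) (i j : Fin n) : ℝ :=
  (m : ℝ)⁻¹ * ∑ r, dotC X C i j * ind (0 ≤ dot (B r) (mvec C (X i))) *
    ind (0 ≤ dot (B r) (mvec C (X j)))

/-- Output of the width-reduced two-layer ReLU network (W = A·B·C). -/
def netWidth {n d ℓ k m : ℕ} (X : Fin n → Fin d → ℝ) (C : Fin ℓ → Fin d → ℝ)
    (A : Fin m → Fin k → ℝ) (v : Fin m → ℝ) (B : Fin k → Fin ℓ → ℝ) (i : Fin n) : ℝ :=
  (Real.sqrt m)⁻¹ * ∑ r, v r * max 0 (dot (A r) (mvec B (mvec C (X i))))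

/-- The sign-indicator vector Z_i(B) of the width-reduced network. -/
def Zvec {n d ℓ k m : ℕ} (X : Fin n → Fin d → ℝ) (C : Fin ℓ → Fin d → ℝ)
    (A : Fin m → Fin k → ℝ) (v : Fin m → ℝ) (B : Fin k → Fin ℓ → ℝ) (i : Fin n) :
    Fin m → ℝ :=
  fun r => v r * ind (0 ≤ dot (A r) (mvec B (mvec C (X i))))

/-- Gradient of Φ(B) = ½‖y-u‖² w.r.t. B (width-reduced network). -/
def gradWidth {n d ℓ k m : ℕ} (X : Fin n → Fin d → ℝ) (C : Fin ℓ → Fin d → ℝ)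
    (A : Fin m → Fin k → ℝ) (v : Fin m → ℝ) (y : Fin n → ℝ)
    (B : Fin k → Fin ℓ → ℝ) : Fin k → Fin ℓ → ℝ :=
  fun a b => -(Real.sqrt m)⁻¹ *
    ∑ j, (y j - netWidth X C A v B j) * vmul (Zvec X C A v B j) A a * mvec C (X j) b

/-- Empirical NTK matrix of the width-reduced network at weights B. -/
def HWidth {n d ℓ k m : ℕ} (X : Fin n → Fin d → ℝ) (C : Fin ℓ → Fin d → ℝ)
    (A : Fin m → Fin k → ℝ) (v : Fin m → ℝ) (B : Fin k → Fin ℓ → ℝ) (i j : Fin n) : ℝ :=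
  (m : ℝ)⁻¹ * dotC X C i j * dot (vmul (Zvec X C A v B i) A) (vmul (Zvec X C A v B j) A)

/-- NTK matrix of the width-reduced network. -/
def HinfWidth {n d ℓ k m : ℕ} (X : Fin n → Fin d → ℝ) (C : Fin ℓ → Fin d → ℝ)
    (A : Fin m → Fin k → ℝ) (v : Fin m → ℝ) (i j : Fin n) : ℝ :=
  ∫ B, HWidth X C A v B i j ∂ gaussMatrix k ℓ 1


/-!
If every row moves by at most `R` in the `C`-geometry, then `B_r · C X_i` moves by at most `R`
(Cauchy–Schwarz with `‖X_i‖ = 1`), so the activation of neuron `r` on input `i` can flip only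
when `|B_r(0) · C X_i| ≤ R`. Hence `|H(B)_{ij} - H(B(0))_{ij}|` is bounded, uniformly in `B`, by
`2/m` times the number of such near-boundary pairs `(r, i)`, `(r, j)`. As `‖C X_i‖ = 1`, the
projection `B_r(0) · C X_i` is standard normal, whose density is below `1/2`, so each
near-boundary event has probability at most `R`; this gives `C₀ = 4`.
-/

lemma ind_eq_indicator {α : Type*} (p : α → Prop) (x : α) :
    ind (p x) = {x | p x}.indicator 1 x := by
  by_cases h : p x <;> simp [ind, h]

lemma ind_nonneg (P : Prop) : 0 ≤ ind P := by
  unfold ind; split <;> norm_num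

lemma ind_le_one (P : Prop) : ind P ≤ 1 := by
  unfold ind; split <;> norm_num

lemma abs_ind_le_one (P : Prop) : |ind P| ≤ 1 := by
  rw [abs_of_nonneg (ind_nonneg P)]; exact ind_le_one P

lemma measurable_ind {α : Type*} [MeasurableSpace α] {p : α → Prop}
    (hp : MeasurableSet {x | p x}) : Measurable fun x => ind (p x) :=
  Measurable.ite hp measurable_const measurable_const

lemma integral_ind {α : Type*} [MeasurableSpace α] (μ : Measure α) {p : α → Prop}
    (hp : MeasurableSet {x | p x}) : ∫ x, ind (p x) ∂μ = μ.real {x | p x} := by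
  simp_rw [ind_eq_indicator, integral_indicator_one hp]

lemma integrable_ind {α : Type*} [MeasurableSpace α] (μ : Measure α) [IsFiniteMeasure μ]
    {p : α → Prop} (hp : MeasurableSet {x | p x}) : Integrable (fun x => ind (p x)) μ :=
  .of_bound (measurable_ind hp).aestronglyMeasurable 1 (.of_forall fun _ => abs_ind_le_one _)

lemma abs_ind_nonneg_sub_ind_nonneg_le {a a₀ R : ℝ} (h : |a - a₀| ≤ R) :
    |ind (0 ≤ a) - ind (0 ≤ a₀)| ≤ ind (|a₀| ≤ R) := by
  rcases abs_le.mp h with ⟨h₁, h₂⟩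
  rcases le_or_gt 0 a with ha | ha <;> rcases le_or_gt 0 a₀ with ha₀ | ha₀
  · simpa [ind, ha, ha₀] using ind_nonneg (|a₀| ≤ R)
  · have : |a₀| ≤ R := by rw [abs_of_neg ha₀]; linarith
    simp [ind, ha, ha₀.not_ge, this]
  · have : |a₀| ≤ R := by rw [abs_of_nonneg ha₀]; linarith
    simp [ind, ha.not_ge, ha₀, this]
  · simpa [ind, ha.not_ge, ha₀.not_ge] using ind_nonneg (|a₀| ≤ R)

lemma abs_mul_sub_mul_le {p p₀ q q₀ : ℝ} (hp₀ : |p₀| ≤ 1) (hq : |q| ≤ 1) :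
    |p * q - p₀ * q₀| ≤ |p - p₀| + |q - q₀| :=
  calc |p * q - p₀ * q₀| = |(p - p₀) * q + p₀ * (q - q₀)| := by ring_nf
    _ ≤ |p - p₀| * |q| + |p₀| * |q - q₀| := by
        rw [← abs_mul, ← abs_mul]; exact abs_add_le _ _
    _ ≤ |p - p₀| * 1 + 1 * |q - q₀| := by gcongr
    _ = |p - p₀| + |q - q₀| := by ring

lemma dot_eq_inner {p : ℕ} (x y : Fin p → ℝ) :
    dot x y = inner ℝ (WithLp.toLp 2 x) (WithLp.toLp 2 y) := by
  simp [dot, PiLp.inner_apply, mul_comm]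

lemma dot_mvec {a d : ℕ} (w : Fin a → ℝ) (C : Fin a → Fin d → ℝ) (x : Fin d → ℝ) :
    dot w (mvec C x) = dot (vmul w C) x := by
  simp only [dot, mvec, vmul, Finset.mul_sum, Finset.sum_mul]
  rw [Finset.sum_comm]
  exact Finset.sum_congr rfl fun _ _ => Finset.sum_congr rfl fun _ _ => by ring

lemma dot_sub_left {p : ℕ} (v w x : Fin p → ℝ) : dot (v - w) x = dot v x - dot w x := by
  simp only [dot, Pi.sub_apply, sub_mul, Finset.sum_sub_distrib]

lemma abs_dot_le {p : ℕ} (v x : Fin p → ℝ) : |dot v x| ≤ eunorm v * eunorm x := by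
  simpa [dot_eq_inner, eunorm, EuclideanSpace.norm_eq] using
    abs_real_inner_le_norm (WithLp.toLp 2 v) (WithLp.toLp 2 x)

lemma measurable_dot_left {p : ℕ} (u : Fin p → ℝ) : Measurable (dot · u) := by
  unfold dot; fun_prop

lemma measurableSet_abs_dot_le {p : ℕ} (u : Fin p → ℝ) (R : ℝ) :
    MeasurableSet {b : Fin p → ℝ | |dot b u| ≤ R} :=
  measurableSet_le (measurable_dot_left u).abs measurable_const

lemma measurableSet_abs_dot_row_le {ℓ m : ℕ} (u : Fin ℓ → ℝ) (R : ℝ) (r : Fin m) :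
    MeasurableSet {B₀ : Fin m → Fin ℓ → ℝ | |dot (B₀ r) u| ≤ R} :=
  measurableSet_le ((measurable_dot_left u).comp (measurable_pi_apply r)).abs measurable_const

namespace ProbabilityTheory

lemma gaussianPDFReal_le (μ : ℝ) (v : ℝ≥0) (x : ℝ) :
    gaussianPDFReal μ v x ≤ (√(2 * π * v))⁻¹ := by
  rw [gaussianPDFReal]
  refine mul_le_of_le_one_right (by positivity) (Real.exp_le_one_iff.mpr ?_)
  exact div_nonpos_of_nonpos_of_nonneg (neg_nonpos.mpr (sq_nonneg _)) (by positivity)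

lemma gaussianReal_Icc_le (μ a b : ℝ) :
    gaussianReal μ 1 (Set.Icc a b) ≤ ENNReal.ofReal ((b - a) / 2) := by
  have hpdf : ∀ x, gaussianPDF μ 1 x ≤ ENNReal.ofReal (1 / 2) := fun x => by
    refine ENNReal.ofReal_le_ofReal ((gaussianPDFReal_le μ 1 x).trans ?_)
    have h2 : (2 : ℝ) ≤ √(2 * π * (1 : ℝ≥0)) := by
      rw [NNReal.coe_one, mul_one, Real.le_sqrt (by norm_num) (by positivity)]
      nlinarith [Real.pi_gt_three]
    rw [one_div]
    exact inv_anti₀ (by norm_num) h2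
  calc gaussianReal μ 1 (Set.Icc a b)
      ≤ ∫⁻ _ in Set.Icc a b, ENNReal.ofReal (1 / 2) := by
        rw [gaussianReal_apply μ one_ne_zero]
        exact setLIntegral_mono measurable_const fun x _ => hpdf x
    _ = ENNReal.ofReal ((b - a) / 2) := by
        rw [setLIntegral_const, Real.volume_Icc, ← ENNReal.ofReal_mul (by norm_num)]
        ring_nf

end ProbabilityTheory

lemma map_dot_stdGaussian {ℓ : ℕ} (u : Fin ℓ → ℝ) :
    (_root_.stdGaussian ℓ).map (dot · u) = gaussianReal 0 (∑ q, u q ^ 2).toNNReal := by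
  set L : StrongDual ℝ (EuclideanSpace ℝ (Fin ℓ)) := innerSL ℝ (WithLp.toLp 2 u)
  have hL : (dot · u) = L ∘ WithLp.toLp 2 := by
    funext b; simp [L, dot_eq_inner, real_inner_comm]
  rw [hL, ← Measure.map_map (by fun_prop) (by fun_prop), _root_.stdGaussian,
    map_pi_eq_stdGaussian, IsGaussian.map_eq_gaussianReal, integral_strongDual_stdGaussian,
    variance_dual_stdGaussian, innerSL_apply_norm, EuclideanSpace.real_norm_sq_eq]

lemma integral_ind_abs_dot_le {ℓ : ℕ} {u : Fin ℓ → ℝ} (hu : ∑ q, u q ^ 2 = 1) {R : ℝ}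
    (hR : 0 ≤ R) : ∫ b, ind (|dot b u| ≤ R) ∂_root_.stdGaussian ℓ ≤ R := by
  have hpre : {b : Fin ℓ → ℝ | |dot b u| ≤ R} = (dot · u) ⁻¹' Set.Icc (-R) R := by
    ext b; simp [abs_le]
  have hmass : _root_.stdGaussian ℓ {b | |dot b u| ≤ R} ≤ ENNReal.ofReal R := by
    rw [hpre, ← Measure.map_apply (measurable_dot_left u) measurableSet_Icc,
      map_dot_stdGaussian, hu, Real.toNNReal_one]
    convert gaussianReal_Icc_le 0 (-R) R using 2
    ring
  rw [integral_ind _ (measurableSet_abs_dot_le u R), measureReal_def]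
  exact ENNReal.toReal_le_of_le_ofReal hR hmass

lemma gaussMatrix_one (m ℓ : ℕ) :
    gaussMatrix m ℓ 1 = Measure.pi fun _ => _root_.stdGaussian ℓ := rfl

lemma integral_ind_abs_dot_row_le {ℓ m : ℕ} {u : Fin ℓ → ℝ} (hu : ∑ q, u q ^ 2 = 1) {R : ℝ}
    (hR : 0 ≤ R) (r : Fin m) : ∫ B₀, ind (|dot (B₀ r) u| ≤ R) ∂gaussMatrix m ℓ 1 ≤ R := by
  rw [gaussMatrix_one, integral_comp_eval (μ := fun _ => _root_.stdGaussian ℓ)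
    (measurable_ind (measurableSet_abs_dot_le u R)).aestronglyMeasurable]
  exact integral_ind_abs_dot_le hu hR

lemma MeasureTheory.integral_sSup_le_integral {α : Type*} [MeasurableSpace α] {μ : Measure α}
    {S : α → Set ℝ} {g : α → ℝ} (hg : Integrable g μ) (h0 : ∀ x, 0 ∈ S x)
    (hle : ∀ x, ∀ w ∈ S x, w ≤ g x) : ∫ x, sSup (S x) ∂μ ≤ ∫ x, g x ∂μ :=
  integral_mono_of_nonneg (.of_forall fun x => le_csSup ⟨g x, hle x⟩ (h0 x)) hg
    (.of_forall fun x => csSup_le ⟨0, h0 x⟩ (hle x))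

lemma abs_dot_mvec_sub_dot_mvec_le {a d : ℕ} {b b₀ : Fin a → ℝ} {C : Fin a → Fin d → ℝ}
    {x : Fin d → ℝ} {R : ℝ} (hb : eunorm (vmul b C - vmul b₀ C) ≤ R) (hx : eunorm x ≤ 1) :
    |dot b (mvec C x) - dot b₀ (mvec C x)| ≤ R := by
  rw [dot_mvec, dot_mvec, ← dot_sub_left]
  exact (abs_dot_le _ _).trans ((mul_le_of_le_one_right (Real.sqrt_nonneg _) hx).trans hb)

def boundaryFraction {ℓ m : ℕ} (R : ℝ) (u v : Fin ℓ → ℝ) (B₀ : Fin m → Fin ℓ → ℝ) : ℝ :=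
  (m : ℝ)⁻¹ * ∑ r, (ind (|dot (B₀ r) u| ≤ R) + ind (|dot (B₀ r) v| ≤ R))

lemma boundaryFraction_nonneg {ℓ m : ℕ} (R : ℝ) (u v : Fin ℓ → ℝ) (B₀ : Fin m → Fin ℓ → ℝ) :
    0 ≤ boundaryFraction R u v B₀ :=
  mul_nonneg (by positivity) <|
    Finset.sum_nonneg fun _ _ => add_nonneg (ind_nonneg _) (ind_nonneg _)

lemma abs_HFac_sub_HFac_le {n d ℓ m : ℕ} (X : Fin n → Fin d → ℝ) (C : Fin ℓ → Fin d → ℝ)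
    {B B₀ : Fin m → Fin ℓ → ℝ} {i j : Fin n} {R : ℝ}
    (hi : ∀ r, |dot (B r) (mvec C (X i)) - dot (B₀ r) (mvec C (X i))| ≤ R)
    (hj : ∀ r, |dot (B r) (mvec C (X j)) - dot (B₀ r) (mvec C (X j))| ≤ R) :
    |HFac X C B i j - HFac X C B₀ i j|
      ≤ |dotC X C i j| * boundaryFraction R (mvec C (X i)) (mvec C (X j)) B₀ := by
  rw [HFac, HFac, boundaryFraction, ← mul_sub, ← Finset.sum_sub_distrib, abs_mul, abs_inv,
    Nat.abs_cast, mul_left_comm, Finset.mul_sum]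
  gcongr
  refine (Finset.abs_sum_le_sum_abs _ _).trans (Finset.sum_le_sum fun r _ => ?_)
  rw [mul_assoc, mul_assoc, ← mul_sub, abs_mul]
  gcongr
  calc _ ≤ |ind (0 ≤ dot (B r) (mvec C (X i))) - ind (0 ≤ dot (B₀ r) (mvec C (X i)))|
        + |ind (0 ≤ dot (B r) (mvec C (X j))) - ind (0 ≤ dot (B₀ r) (mvec C (X j)))| :=
        abs_mul_sub_mul_le (abs_ind_le_one _) (abs_ind_le_one _)
    _ ≤ _ := add_le_add (abs_ind_nonneg_sub_ind_nonneg_le (hi r))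
        (abs_ind_nonneg_sub_ind_nonneg_le (hj r))

lemma integrable_boundaryFraction {ℓ m : ℕ} (μ : Measure (Fin m → Fin ℓ → ℝ))
    [IsFiniteMeasure μ] (R : ℝ) (u v : Fin ℓ → ℝ) : Integrable (boundaryFraction R u v) μ :=
  (integrable_finsetSum _ fun r _ => (integrable_ind μ (measurableSet_abs_dot_row_le u R r)).add
    (integrable_ind μ (measurableSet_abs_dot_row_le v R r))).const_mul _

lemma integral_boundaryFraction_le {ℓ m : ℕ} {u v : Fin ℓ → ℝ} (hu : ∑ q, u q ^ 2 = 1)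
    (hv : ∑ q, v q ^ 2 = 1) {R : ℝ} (hR : 0 ≤ R) :
    ∫ B₀, boundaryFraction R u v B₀ ∂gaussMatrix m ℓ 1 ≤ 2 * R := by
  have hint : ∀ (w : Fin ℓ → ℝ) (r : Fin m),
      Integrable (fun B₀ => ind (|dot (B₀ r) w| ≤ R)) (gaussMatrix m ℓ 1) := fun w r =>
    integrable_ind _ (measurableSet_abs_dot_row_le w R r)
  have hrow : ∀ r : Fin m, ∫ B₀, (ind (|dot (B₀ r) u| ≤ R) + ind (|dot (B₀ r) v| ≤ R))
      ∂gaussMatrix m ℓ 1 ≤ 2 * R := fun r => by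
    rw [integral_add (hint u r) (hint v r)]
    linarith [integral_ind_abs_dot_row_le hu hR r, integral_ind_abs_dot_row_le hv hR r]
  calc _ = (m : ℝ)⁻¹ * ∑ r : Fin m, ∫ B₀, (ind (|dot (B₀ r) u| ≤ R) + ind (|dot (B₀ r) v| ≤ R))
        ∂gaussMatrix m ℓ 1 := by
        simp only [boundaryFraction]
        rw [integral_const_mul, integral_finsetSum]
        exact fun r _ => (hint u r).add (hint v r)
    _ ≤ (m : ℝ)⁻¹ * (m * (2 * R)) := by
        gcongr
        simpa using Finset.sum_le_card_nsmul Finset.univ _ _ fun r _ => hrow r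
    _ ≤ 2 * R := by
        rcases eq_or_ne m 0 with rfl | hm
        · simp [hR]
        · rw [inv_mul_cancel_left₀ (Nat.cast_ne_zero.mpr hm)]

theorem stmt4 :
    ∃ C₀ : ℝ, 0 < C₀ ∧
    ∀ (n d ℓ m : ℕ), 0 < m →
    ∀ X : Fin n → Fin d → ℝ, (∀ i, ∑ j, X i j ^ 2 = 1) →
    ∀ C : Fin ℓ → Fin d → ℝ,
      (∀ i, eunorm (mvec C (X i)) = 1) → (∀ i j, |dotC X C i j| ≤ 2) →
    ∀ R : ℝ, 0 < R → ∀ i j : Fin n,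
    (∫ B0, sSup {w : ℝ | ∃ B : Fin m → Fin ℓ → ℝ,
        (∀ r, eunorm (fun q => vmul (B r) C q - vmul (B0 r) C q) ≤ R) ∧
        w = |HFac X C B i j - HFac X C B0 i j|} ∂ gaussMatrix m ℓ 1) ≤ C₀ * R := by
  refine ⟨4, by norm_num, fun n d ℓ m _ X hX C hC hdotC R hR i j => ?_⟩
  have hCX : ∀ k, ∑ q, mvec C (X k) q ^ 2 = 1 := fun k =>
    (Real.sqrt_eq_one (x := ∑ q, mvec C (X k) q ^ 2)).mp (hC k)
  have hXnorm : ∀ k, eunorm (X k) ≤ 1 := fun k => by simp [eunorm, hX k]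
  calc _ ≤ ∫ B₀, 2 * boundaryFraction R (mvec C (X i)) (mvec C (X j)) B₀
        ∂gaussMatrix m ℓ 1 := by
        refine integral_sSup_le_integral ((integrable_boundaryFraction _ _ _ _).const_mul 2)
          (fun B₀ => ⟨B₀, fun r => by simpa [eunorm] using hR.le, by simp⟩) ?_
        rintro B₀ _ ⟨B, hB, rfl⟩
        refine (abs_HFac_sub_HFac_le X C (fun r => ?_) (fun r => ?_)).trans
          (mul_le_mul_of_nonneg_right (hdotC i j) (boundaryFraction_nonneg _ _ _ _))
        exacts [abs_dot_mvec_sub_dot_mvec_le (hB r) (hXnorm i),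
          abs_dot_mvec_sub_dot_mvec_le (hB r) (hXnorm j)]
    _ ≤ 2 * (2 * R) := by
        rw [integral_const_mul]
        gcongr
        exact integral_boundaryFraction_le (hCX i) (hCX j) hR.le
    _ = 4 * R := by ring
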